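/- Performance lower bound (Theorem 1): Let M, M̂ be MDPs with the same reward r and value functions bounded by δ. For any policies π (learner) and π_D (behavior), J(π, M) ≥ J(π, M̂) − (2γδ/(1−γ)) · ( E_{(s,a)∼ρ^{π_D}_M}[ d_TV(T(·|s,a), T̂(·|s,a)) ] + sqrt(2·d_JS(ρ^{π_D}_M, ρ^π_{M̂})) ). -/

import Mathlib

/-!
Telescoping: let `P`, `P̂` be the state-transition matrices of `π` in `M`, `M̂`, `r_π` its expected
reward and `d = ∑ₜ γᵗ μ₀ P̂ᵗ` its discounted state visitation in `M̂`. The Bellman equation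
`V = r_π + γ P V` and the flow equation `d = μ₀ + γ P̂ᵀ d` give
`J(π, M̂) - J(π, M) = γ ⟨d, (P̂ - P) V⟩ = γ/(1-γ) · E_{ρ^π_{M̂}} ⟨T̂(·|s,a) - T(·|s,a), V⟩`.
As `|V| ≤ δ`, each inner product is at most `2δ d_TV(T, T̂)`, a function with values in `[0, 1]`,
so replacing `ρ^π_{M̂}` by `ρ^{π_D}_M` costs at most `d_TV` of the two occupancies. Finally, with
`m = (p + q)/2`, `p = m(1 + t)` and `q = m(1 - t)`, one has `d_TV(p, q) = E_m |t|` and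
`2 d_JS(p, q) = E_m [(1+t) log(1+t) + (1-t) log(1-t)] ≥ E_m t² ≥ (E_m |t|)²`.
-/

open scoped BigOperators

/-- A Markov decision process on finite state space `S` and action space `A`,
with reward `r`, transition kernel `T` (as a function giving next-state probabilities),
and discount factor `γ`. -/
structure MDP (S A : Type*) where
  r : S → A → ℝ
  T : S → A → S → ℝ
  γ : ℝ

variable {S A : Type*} [Fintype S] [Fintype A] [DecidableEq S]

/-- `π` is a stationary stochastic policy: `π s` is a probability distribution over actions. -/
def IsPolicy (π : S → A → ℝ) : Prop :=
  (∀ s a, 0 ≤ π s a) ∧ ∀ s, ∑ a, π s a = 1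

/-- `T` is a transition kernel: `T s a` is a probability distribution over next states. -/
def IsKernel (T : S → A → S → ℝ) : Prop :=
  (∀ s a s', 0 ≤ T s a s') ∧ ∀ s a, ∑ s', T s a s' = 1

/-- `μ` is a probability distribution on states. -/
def IsDist (μ : S → ℝ) : Prop :=
  (∀ s, 0 ≤ μ s) ∧ ∑ s, μ s = 1

/-- `stateDist M π μ₀ t s` is the probability `P^π_{M,t}(s)` that the state at time `t`
equals `s` when executing policy `π` in MDP `M` from initial distribution `μ₀`. -/
noncomputable def stateDist (M : MDP S A) (π : S → A → ℝ) (μ₀ : S → ℝ) : ℕ → S → ℝ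
  | 0 => μ₀
  | t + 1 => fun s' => ∑ s, ∑ a, stateDist M π μ₀ t s * π s a * M.T s a s'

/-- Expected reward at time `t` under policy `π` in MDP `M` started from `μ₀`. -/
noncomputable def expRewardAt (M : MDP S A) (π : S → A → ℝ) (μ₀ : S → ℝ) (t : ℕ) : ℝ :=
  ∑ s, ∑ a, stateDist M π μ₀ t s * π s a * M.r s a

/-- Value function `V^π_M(s) = E[∑_t γ^t r(s_t,a_t) | s₀ = s]`. -/
noncomputable def Vval (M : MDP S A) (π : S → A → ℝ) (s : S) : ℝ :=
  ∑' t : ℕ, M.γ ^ t * expRewardAt M π (fun x => if x = s then (1 : ℝ) else 0) t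

/-- Expected discounted return `J(π, M) = E_{s ∼ μ₀}[V^π_M(s)]`. -/
noncomputable def Jval (M : MDP S A) (π : S → A → ℝ) (μ₀ : S → ℝ) : ℝ :=
  ∑ s, μ₀ s * Vval M π s

/-- Normalized discounted occupancy measure
`ρ^π_M(s,a) = (1-γ) ∑_t γ^t P^π_{M,t}(s) π(a|s)`. -/
noncomputable def occupancy (M : MDP S A) (π : S → A → ℝ) (μ₀ : S → ℝ) (s : S) (a : A) : ℝ :=
  (1 - M.γ) * (∑' t : ℕ, M.γ ^ t * stateDist M π μ₀ t s) * π s a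

/-- Total variation distance between finite distributions: `sup_E |p(E) - q(E)|`. -/
noncomputable def tvFin {X : Type*} [Fintype X] (p q : X → ℝ) : ℝ :=
  ⨆ E : Finset X, |∑ x ∈ E, p x - ∑ x ∈ E, q x|

/-- Kullback–Leibler divergence between finite distributions (`0 log 0 = 0` convention). -/
noncomputable def klFin {X : Type*} [Fintype X] (p q : X → ℝ) : ℝ :=
  ∑ x, p x * Real.log (p x / q x)

/-- Jensen–Shannon divergence between finite distributions. -/
noncomputable def jsFin {X : Type*} [Fintype X] (p q : X → ℝ) : ℝ :=
  (klFin p (fun x => (p x + q x) / 2) + klFin q (fun x => (p x + q x) / 2)) / 2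

open Matrix Finset

section FiniteDistributions
open Real

lemma two_mul_le_log_one_add_sub_log_one_sub {t : ℝ} (h0 : 0 ≤ t) (h1 : t < 1) :
    2 * t ≤ log (1 + t) - log (1 - t) := by
  have hs := hasSum_log_sub_log_of_abs_lt_one (abs_lt.mpr ⟨by linarith, h1⟩)
  simpa using le_hasSum hs 0 fun k _ => by positivity

lemma sq_le_one_add_mul_log_add_one_sub_mul_log {t : ℝ} (ht : |t| ≤ 1) :
    t ^ 2 ≤ (1 + t) * log (1 + t) + (1 - t) * log (1 - t) := by
  wlog h0 : 0 ≤ t generalizing t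
  · have := this (t := -t) (by rwa [abs_neg]) (by linarith)
    rwa [neg_sq, ← sub_eq_add_neg, sub_neg_eq_add, add_comm] at this
  set h : ℝ → ℝ := fun x => (1 + x) * log (1 + x) + (1 - x) * log (1 - x) - x ^ 2
  have hcont : Continuous h := by
    have := continuous_mul_log
    fun_prop
  have hderiv : ∀ x ∈ interior (Set.Icc (0 : ℝ) 1),
      HasDerivWithinAt h (log (1 + x) - log (1 - x) - 2 * x) (interior (Set.Icc 0 1)) x := by
    intro x hx
    rw [interior_Icc] at hx
    have h1 := (hasDerivAt_mul_log (x := 1 + x) (by linarith [hx.1])).comp x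
      ((hasDerivAt_id x).const_add 1)
    have h2 := (hasDerivAt_mul_log (x := 1 - x) (by linarith [hx.2])).comp x
      ((hasDerivAt_id x).const_sub 1)
    exact (((h1.add h2).sub (hasDerivAt_pow 2 x)).congr_deriv (by ring)).hasDerivWithinAt
  have hmono : MonotoneOn h (Set.Icc 0 1) :=
    monotoneOn_of_hasDerivWithinAt_nonneg (convex_Icc 0 1) hcont.continuousOn hderiv
      fun x hx => by
        rw [interior_Icc] at hx
        linarith [two_mul_le_log_one_add_sub_log_one_sub hx.1.le hx.2]
  have := hmono ⟨le_rfl, zero_le_one⟩ ⟨h0, (abs_le.mp ht).2⟩ h0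
  simp only [h] at this
  norm_num at this
  linarith

variable {X : Type*} [Fintype X]

lemma le_tvFin (p q : X → ℝ) (E : Finset X) : |∑ x ∈ E, p x - ∑ x ∈ E, q x| ≤ tvFin p q :=
  le_ciSup (f := fun E : Finset X => |∑ x ∈ E, p x - ∑ x ∈ E, q x|)
    (Set.finite_range _).bddAbove E

lemma tvFin_nonneg (p q : X → ℝ) : 0 ≤ tvFin p q := by
  simpa using le_tvFin p q ∅

lemma tvFin_eq_sum_abs_sub_div_two {p q : X → ℝ} (h : ∑ x, p x = ∑ x, q x) :
    tvFin p q = (∑ x, |p x - q x|) / 2 := by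
  classical
  have hneg : ∑ x, (p x - q x)⁻ = ∑ x, (p x - q x)⁺ := by
    have := sum_congr rfl fun x (_ : x ∈ univ) => posPart_sub_negPart (p x - q x)
    rw [sum_sub_distrib, sum_sub_distrib, h, sub_self] at this
    linarith
  have habs : (∑ x, |p x - q x|) / 2 = ∑ x, (p x - q x)⁺ := by
    simp only [← posPart_add_negPart, sum_add_distrib, hneg]
    ring
  rw [habs]
  apply le_antisymm
  · refine ciSup_le fun E => ?_
    rw [← sum_sub_distrib, abs_le]
    constructor
    · calc -∑ x, (p x - q x)⁺ = -∑ x, (p x - q x)⁻ := by rw [hneg]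
        _ ≤ -∑ x ∈ E, (p x - q x)⁻ := neg_le_neg <|
          sum_le_sum_of_subset_of_nonneg (subset_univ E) fun x _ _ => negPart_nonneg _
        _ ≤ ∑ x ∈ E, (p x - q x) := by
          rw [← sum_neg_distrib]
          exact sum_le_sum fun x _ => neg_le.mp (neg_le_negPart _)
    · calc ∑ x ∈ E, (p x - q x) ≤ ∑ x ∈ E, (p x - q x)⁺ := sum_le_sum fun x _ => le_posPart _
        _ ≤ ∑ x, (p x - q x)⁺ :=
          sum_le_sum_of_subset_of_nonneg (subset_univ E) fun x _ _ => posPart_nonneg _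
  · have hE := le_tvFin p q (univ.filter fun x => 0 ≤ p x - q x)
    rwa [← sum_sub_distrib, sum_filter, ← sum_congr rfl fun x _ => posPart_eq_ite,
      abs_of_nonneg (sum_nonneg fun x _ => posPart_nonneg _)] at hE

lemma tvFin_le_one {p q : X → ℝ} (hp : IsDist p) (hq : IsDist q) : tvFin p q ≤ 1 := by
  rw [tvFin_eq_sum_abs_sub_div_two (hp.2.trans hq.2.symm), div_le_one two_pos]
  calc ∑ x, |p x - q x| ≤ ∑ x, (p x + q x) := sum_le_sum fun x _ =>
        abs_le.mpr ⟨by linarith [hp.1 x, hq.1 x], by linarith [hp.1 x, hq.1 x]⟩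
    _ = 2 := by rw [sum_add_distrib, hp.2, hq.2]; norm_num

lemma sum_sub_mul_le_two_mul_tvFin {p q V : X → ℝ} {δ : ℝ} (h : ∑ x, p x = ∑ x, q x)
    (hV : ∀ x, |V x| ≤ δ) : ∑ x, (q x - p x) * V x ≤ 2 * δ * tvFin p q := by
  rw [tvFin_eq_sum_abs_sub_div_two h]
  calc ∑ x, (q x - p x) * V x ≤ ∑ x, |p x - q x| * δ := sum_le_sum fun x _ => by
        rw [abs_sub_comm]
        exact (le_abs_self _).trans
          ((abs_mul _ _).trans_le (mul_le_mul_of_nonneg_left (hV x) (abs_nonneg _)))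
    _ = 2 * δ * ((∑ x, |p x - q x|) / 2) := by rw [← sum_mul]; ring

lemma sum_mul_le_sum_mul_add_tvFin {p q f : X → ℝ} (h : ∑ x, p x = ∑ x, q x)
    (hf0 : ∀ x, 0 ≤ f x) (hf1 : ∀ x, f x ≤ 1) :
    ∑ x, q x * f x ≤ ∑ x, p x * f x + tvFin p q := by
  have hV : ∀ x, |f x - 1 / 2| ≤ 1 / 2 := fun x =>
    abs_le.mpr ⟨by linarith [hf0 x], by linarith [hf1 x]⟩
  have hcentre : ∑ x, (q x - p x) * (f x - 1 / 2) = ∑ x, q x * f x - ∑ x, p x * f x := by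
    simp only [sub_mul, mul_sub, sum_sub_distrib, ← sum_mul, h]
    ring
  linarith [sum_sub_mul_le_two_mul_tvFin h hV]

lemma mul_log_div_add_mul_log_div_eq {a b : ℝ} (ha : 0 ≤ a) (hb : 0 ≤ b) :
    a * log (a / ((a + b) / 2)) + b * log (b / ((a + b) / 2)) =
      (a + b) / 2 * ((1 + (a - b) / (a + b)) * log (1 + (a - b) / (a + b)) +
        (1 - (a - b) / (a + b)) * log (1 - (a - b) / (a + b))) := by
  rcases (add_nonneg ha hb).eq_or_lt with hab | hab
  · obtain ⟨rfl, rfl⟩ : a = 0 ∧ b = 0 := ⟨by linarith, by linarith⟩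
    simp
  have h1 : 1 + (a - b) / (a + b) = a / ((a + b) / 2) := by field_simp; ring
  have h2 : 1 - (a - b) / (a + b) = b / ((a + b) / 2) := by field_simp; ring
  rw [h1, h2, mul_add, ← mul_assoc, ← mul_assoc, mul_div_cancel₀ _ (by positivity),
    mul_div_cancel₀ _ (by positivity)]

theorem tvFin_le_sqrt_two_mul_jsFin {p q : X → ℝ} (hp : IsDist p) (hq : IsDist q) :
    tvFin p q ≤ √(2 * jsFin p q) := by
  obtain ⟨hp0, hp⟩ := hp
  obtain ⟨hq0, hq⟩ := hq
  set m : X → ℝ := fun x => (p x + q x) / 2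
  set t : X → ℝ := fun x => (p x - q x) / (p x + q x)
  have hm0 : ∀ x, 0 ≤ m x := fun x => by have := hp0 x; have := hq0 x; positivity
  have hm : ∑ x, m x = 1 := by simp only [m, ← sum_div, sum_add_distrib, hp, hq]; norm_num
  have ht : ∀ x, |t x| ≤ 1 := fun x => by
    rw [abs_div, abs_of_nonneg (add_nonneg (hp0 x) (hq0 x))]
    exact div_le_one_of_le₀ (abs_le.mpr ⟨by linarith [hp0 x, hq0 x], by linarith [hp0 x, hq0 x]⟩)
      (add_nonneg (hp0 x) (hq0 x))
  have htv : tvFin p q = ∑ x, m x * |t x| := by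
    rw [tvFin_eq_sum_abs_sub_div_two (hp.trans hq.symm), sum_div]
    refine sum_congr rfl fun x _ => ?_
    rcases (add_nonneg (hp0 x) (hq0 x)).eq_or_lt with h | h
    · obtain ⟨h1, h2⟩ : p x = 0 ∧ q x = 0 :=
        ⟨by linarith [hp0 x, hq0 x], by linarith [hp0 x, hq0 x]⟩
      simp [m, t, h1, h2]
    · simp only [m, t, abs_div, abs_of_pos h]
      field_simp
  have hjs : 2 * jsFin p q =
      ∑ x, m x * ((1 + t x) * log (1 + t x) + (1 - t x) * log (1 - t x)) := by
    simp only [jsFin, klFin, m, t, ← mul_log_div_add_mul_log_div_eq (hp0 _) (hq0 _),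
      sum_add_distrib]
    ring
  have hcs : (∑ x, m x * |t x|) ^ 2 ≤ ∑ x, m x * t x ^ 2 := by
    have := sum_sq_le_sum_mul_sum_of_sq_le_mul univ (r := fun x => m x * |t x|) (f := m)
      (g := fun x => m x * t x ^ 2) (fun x _ => hm0 x) (fun x _ => by have := hm0 x; positivity)
      fun x _ => (by rw [mul_pow, sq_abs]; ring : _ = _).le
    rwa [hm, one_mul] at this
  rw [htv]
  refine (le_abs_self _).trans (abs_le_sqrt (hcs.trans ?_))
  rw [hjs]
  exact sum_le_sum fun x _ => mul_le_mul_of_nonneg_left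
    (sq_le_one_add_mul_log_add_one_sub_mul_log (ht x)) (hm0 x)

lemma sum_mul_le_sum_mul_add_sqrt_two_mul_jsFin {p q f : X → ℝ} (hp : IsDist p) (hq : IsDist q)
    (hf0 : ∀ x, 0 ≤ f x) (hf1 : ∀ x, f x ≤ 1) :
    ∑ x, q x * f x ≤ ∑ x, p x * f x + √(2 * jsFin p q) :=
  (sum_mul_le_sum_mul_add_tvFin (hp.2.trans hq.2.symm) hf0 hf1).trans
    (add_le_add_right (tvFin_le_sqrt_two_mul_jsFin hp hq) _)

end FiniteDistributions

section GeometricPowerSeries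
variable {n : Type*} [Fintype n]

lemma dotProduct_sub_dotProduct_of_eq_add {P P' : Matrix n n ℝ} {γ : ℝ} {μ d r V : n → ℝ}
    (hd : d = μ + γ • (P'ᵀ *ᵥ d)) (hV : V = r + γ • (P *ᵥ V)) :
    d ⬝ᵥ r - μ ⬝ᵥ V = γ * d ⬝ᵥ ((P' - P) *ᵥ V) := by
  have hμ : μ = d - γ • (P'ᵀ *ᵥ d) := eq_sub_of_add_eq hd.symm
  have hdV : d ⬝ᵥ V = d ⬝ᵥ r + γ * d ⬝ᵥ (P *ᵥ V) := by
    conv_lhs => rw [hV]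
    rw [dotProduct_add, dotProduct_smul, smul_eq_mul]
  rw [hμ, sub_dotProduct, smul_dotProduct, mulVec_transpose, ← dotProduct_mulVec, hdV,
    sub_mulVec, dotProduct_sub, smul_eq_mul]
  ring

variable [DecidableEq n]

lemma summable_geometric_mul_pow_mulVec_apply {Q : Matrix n n ℝ} {C γ : ℝ}
    (hQ : ∀ t i j, |(Q ^ t) i j| ≤ C) (hγ0 : 0 ≤ γ) (hγ1 : γ < 1) (v : n → ℝ) (i : n) :
    Summable fun t => γ ^ t * (Q ^ t *ᵥ v) i := by
  refine .of_norm_bounded (g := fun t => γ ^ t * (C * ∑ j, |v j|))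
    ((summable_geometric_of_lt_one hγ0 hγ1).mul_right _) fun t => ?_
  rw [Real.norm_eq_abs, abs_mul, abs_of_nonneg (pow_nonneg hγ0 t)]
  refine mul_le_mul_of_nonneg_left ?_ (pow_nonneg hγ0 t)
  calc |(Q ^ t *ᵥ v) i| ≤ ∑ j, |(Q ^ t) i j| * |v j| := by
        simp only [mulVec, dotProduct, ← abs_mul]
        exact abs_sum_le_sum_abs _ _
    _ ≤ ∑ j, C * |v j| := sum_le_sum fun j _ => mul_le_mul_of_nonneg_right (hQ t i j) (abs_nonneg _)
    _ = C * ∑ j, |v j| := (mul_sum _ _ _).symm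

lemma tsum_geometric_mul_pow_mulVec_eq {Q : Matrix n n ℝ} {γ : ℝ} {v : n → ℝ}
    (hsum : ∀ i, Summable fun t => γ ^ t * (Q ^ t *ᵥ v) i) :
    (fun i => ∑' t, γ ^ t * (Q ^ t *ᵥ v) i) =
      v + γ • (Q *ᵥ fun i => ∑' t, γ ^ t * (Q ^ t *ᵥ v) i) := by
  funext i
  have hshift : ∀ t, γ ^ (t + 1) * (Q ^ (t + 1) *ᵥ v) i =
      ∑ j, γ * Q i j * (γ ^ t * (Q ^ t *ᵥ v) j) := fun t => by
    rw [pow_succ', pow_succ', ← mulVec_mulVec, mulVec, dotProduct, mul_sum]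
    exact sum_congr rfl fun j _ => by ring
  rw [(hsum i).tsum_eq_zero_add]
  simp only [hshift, pow_zero, one_mul, one_mulVec, Pi.add_apply, Pi.smul_apply, smul_eq_mul]
  rw [Summable.tsum_finsetSum fun j _ => (hsum j).mul_left (γ * Q i j)]
  congr 1
  rw [mulVec, dotProduct, mul_sum]
  exact sum_congr rfl fun j _ => by rw [tsum_mul_left]; ring

lemma dotProduct_tsum_geometric_mul_pow_mulVec {Q : Matrix n n ℝ} {γ : ℝ} {μ v : n → ℝ}
    (hv : ∀ i, Summable fun t => γ ^ t * (Q ^ t *ᵥ v) i)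
    (hμ : ∀ i, Summable fun t => γ ^ t * (Qᵀ ^ t *ᵥ μ) i) :
    μ ⬝ᵥ (fun i => ∑' t, γ ^ t * (Q ^ t *ᵥ v) i) =
      (fun i => ∑' t, γ ^ t * (Qᵀ ^ t *ᵥ μ) i) ⬝ᵥ v := by
  have hdual : ∀ t, μ ⬝ᵥ (Q ^ t *ᵥ v) = (Qᵀ ^ t *ᵥ μ) ⬝ᵥ v := fun t => by
    rw [← transpose_pow, mulVec_transpose, dotProduct_mulVec]
  simp only [dotProduct, ← tsum_mul_left, ← tsum_mul_right]
  rw [← Summable.tsum_finsetSum fun i _ => (hv i).mul_left (μ i),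
    ← Summable.tsum_finsetSum fun i _ => (hμ i).mul_right (v i)]
  refine tsum_congr fun t => ?_
  have := congrArg (γ ^ t * ·) (hdual t)
  simpa only [dotProduct, mul_sum, mul_left_comm, mul_assoc] using this

lemma abs_pow_apply_le_one_of_mem_rowStochastic {P : Matrix n n ℝ}
    (hP : P ∈ rowStochastic ℝ n) (t : ℕ) (i j : n) : |(P ^ t) i j| ≤ 1 :=
  abs_le.mpr ⟨(neg_nonpos.mpr zero_le_one).trans (nonneg_of_mem_rowStochastic (pow_mem hP t)),
    le_one_of_mem_rowStochastic (pow_mem hP t)⟩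

end GeometricPowerSeries

namespace MDP

variable (M : MDP S A) (π : S → A → ℝ)

noncomputable def policyMatrix : Matrix S S ℝ := fun s s' => ∑ a, π s a * M.T s a s'

noncomputable def policyReward (s : S) : ℝ := ∑ a, π s a * M.r s a

noncomputable def discountedVisits (μ₀ : S → ℝ) (s : S) : ℝ :=
  ∑' t, M.γ ^ t * stateDist M π μ₀ t s

lemma stateDist_eq_vecMul (μ₀ : S → ℝ) (t : ℕ) :
    stateDist M π μ₀ t = μ₀ ᵥ* M.policyMatrix π ^ t := by
  induction t with
  | zero => simp [stateDist]
  | succ t ih =>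
    funext s'
    rw [pow_succ, ← vecMul_vecMul, ← ih]
    simp only [stateDist, vecMul, dotProduct, policyMatrix, mul_sum, mul_assoc]

lemma expRewardAt_eq_dotProduct (μ₀ : S → ℝ) (t : ℕ) :
    expRewardAt M π μ₀ t = μ₀ ⬝ᵥ (M.policyMatrix π ^ t *ᵥ M.policyReward π) := by
  rw [dotProduct_mulVec, ← stateDist_eq_vecMul]
  simp only [expRewardAt, dotProduct, policyReward, mul_sum, mul_assoc]

lemma Vval_eq_tsum (s : S) :
    Vval M π s = ∑' t, M.γ ^ t * (M.policyMatrix π ^ t *ᵥ M.policyReward π) s := by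
  simp only [Vval, expRewardAt_eq_dotProduct, dotProduct, ite_mul, one_mul, zero_mul,
    sum_ite_eq', mem_univ, if_true]

lemma discountedVisits_eq_tsum (μ₀ : S → ℝ) :
    M.discountedVisits π μ₀ = fun s => ∑' t, M.γ ^ t * ((M.policyMatrix π)ᵀ ^ t *ᵥ μ₀) s := by
  funext s
  simp only [discountedVisits, stateDist_eq_vecMul, ← mulVec_transpose, transpose_pow]

variable {M π}

lemma policyMatrix_mem_rowStochastic (hπ : IsPolicy π) (hT : IsKernel M.T) :
    M.policyMatrix π ∈ rowStochastic ℝ S := by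
  refine mem_rowStochastic_iff_sum.mpr
    ⟨fun s s' => sum_nonneg fun a _ => mul_nonneg (hπ.1 s a) (hT.1 s a s'), fun s => ?_⟩
  simp only [policyMatrix]
  rw [sum_comm]
  simp only [← mul_sum, hT.2, mul_one, hπ.2]

lemma isDist_stateDist (hπ : IsPolicy π) (hT : IsKernel M.T) {μ₀ : S → ℝ} (hμ : IsDist μ₀)
    (t : ℕ) : IsDist (stateDist M π μ₀ t) := by
  have hP := pow_mem (policyMatrix_mem_rowStochastic hπ hT) t
  rw [stateDist_eq_vecMul]
  refine ⟨nonneg_vecMul_of_mem_rowStochastic hP hμ.1, ?_⟩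
  rw [← dotProduct_one]
  exact vecMul_dotProduct_one_eq_one_rowStochastic hP (by rw [dotProduct_one, hμ.2])

lemma summable_pow_mulVec (hπ : IsPolicy π) (hT : IsKernel M.T) (hγ0 : 0 ≤ M.γ) (hγ1 : M.γ < 1)
    (v : S → ℝ) (s : S) : Summable fun t => M.γ ^ t * (M.policyMatrix π ^ t *ᵥ v) s :=
  summable_geometric_mul_pow_mulVec_apply
    (abs_pow_apply_le_one_of_mem_rowStochastic (policyMatrix_mem_rowStochastic hπ hT)) hγ0 hγ1 v s

lemma summable_transpose_pow_mulVec (hπ : IsPolicy π) (hT : IsKernel M.T) (hγ0 : 0 ≤ M.γ)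
    (hγ1 : M.γ < 1) (v : S → ℝ) (s : S) :
    Summable fun t => M.γ ^ t * ((M.policyMatrix π)ᵀ ^ t *ᵥ v) s :=
  summable_geometric_mul_pow_mulVec_apply (fun t i j => by
    rw [← transpose_pow]
    exact abs_pow_apply_le_one_of_mem_rowStochastic (policyMatrix_mem_rowStochastic hπ hT) t j i)
    hγ0 hγ1 v s

lemma Vval_eq_add (hπ : IsPolicy π) (hT : IsKernel M.T) (hγ0 : 0 ≤ M.γ) (hγ1 : M.γ < 1) :
    Vval M π = M.policyReward π + M.γ • (M.policyMatrix π *ᵥ Vval M π) := by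
  rw [funext (Vval_eq_tsum M π)]
  exact tsum_geometric_mul_pow_mulVec_eq (summable_pow_mulVec hπ hT hγ0 hγ1 _)

lemma discountedVisits_eq_add (hπ : IsPolicy π) (hT : IsKernel M.T) (hγ0 : 0 ≤ M.γ)
    (hγ1 : M.γ < 1) (μ₀ : S → ℝ) :
    M.discountedVisits π μ₀ = μ₀ + M.γ • ((M.policyMatrix π)ᵀ *ᵥ M.discountedVisits π μ₀) := by
  rw [discountedVisits_eq_tsum]
  exact tsum_geometric_mul_pow_mulVec_eq (summable_transpose_pow_mulVec hπ hT hγ0 hγ1 _)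

lemma Jval_eq_discountedVisits_dotProduct (hπ : IsPolicy π) (hT : IsKernel M.T)
    (hγ0 : 0 ≤ M.γ) (hγ1 : M.γ < 1) (μ₀ : S → ℝ) :
    Jval M π μ₀ = M.discountedVisits π μ₀ ⬝ᵥ M.policyReward π := by
  change μ₀ ⬝ᵥ Vval M π = _
  rw [funext (Vval_eq_tsum M π), discountedVisits_eq_tsum]
  exact dotProduct_tsum_geometric_mul_pow_mulVec (summable_pow_mulVec hπ hT hγ0 hγ1 _)
    (by simpa only [transpose_transpose] using summable_transpose_pow_mulVec hπ hT hγ0 hγ1 μ₀)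

theorem Jval_sub_Jval_eq_sum_occupancy {Mhat : MDP S A} (hr : M.r = Mhat.r) (hγ : M.γ = Mhat.γ)
    (hγ0 : 0 ≤ M.γ) (hγ1 : M.γ < 1) (hπ : IsPolicy π) (hT : IsKernel M.T)
    (hThat : IsKernel Mhat.T) (μ₀ : S → ℝ) :
    Jval Mhat π μ₀ - Jval M π μ₀ = M.γ / (1 - M.γ) *
      ∑ s, ∑ a, occupancy Mhat π μ₀ s a * ∑ s', (Mhat.T s a s' - M.T s a s') * Vval M π s' := by
  have hdiff : ∀ s, ((Mhat.policyMatrix π - M.policyMatrix π) *ᵥ Vval M π) s =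
      ∑ a, π s a * ∑ s', (Mhat.T s a s' - M.T s a s') * Vval M π s' := fun s => by
    simp only [mulVec, dotProduct, Matrix.sub_apply, policyMatrix, ← sum_sub_distrib, ← mul_sub,
      sum_mul, mul_sum]
    rw [sum_comm]
    simp only [mul_assoc]
  have hreward : Mhat.policyReward π = M.policyReward π := by
    funext s
    simp only [policyReward, hr]
  have hvisits := discountedVisits_eq_add hπ hThat (hγ ▸ hγ0) (hγ ▸ hγ1) μ₀
  rw [← hγ] at hvisits
  rw [Jval_eq_discountedVisits_dotProduct hπ hThat (hγ ▸ hγ0) (hγ ▸ hγ1), hreward,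
    show Jval M π μ₀ = μ₀ ⬝ᵥ Vval M π from rfl,
    dotProduct_sub_dotProduct_of_eq_add hvisits (Vval_eq_add hπ hT hγ0 hγ1)]
  simp only [dotProduct, hdiff, occupancy, discountedVisits, ← hγ, mul_sum]
  refine sum_congr rfl fun s _ => sum_congr rfl fun a _ => ?_
  field_simp [sub_ne_zero.mpr hγ1.ne']

lemma isDist_occupancy (hπ : IsPolicy π) (hT : IsKernel M.T) {μ₀ : S → ℝ} (hμ : IsDist μ₀)
    (hγ0 : 0 ≤ M.γ) (hγ1 : M.γ < 1) : IsDist fun x : S × A => occupancy M π μ₀ x.1 x.2 := by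
  refine ⟨fun x => mul_nonneg (mul_nonneg (sub_nonneg.mpr hγ1.le) (tsum_nonneg fun t =>
    mul_nonneg (pow_nonneg hγ0 t) ((isDist_stateDist hπ hT hμ t).1 x.1))) (hπ.1 x.1 x.2), ?_⟩
  have hsum : ∀ s, Summable fun t => M.γ ^ t * stateDist M π μ₀ t s := fun s => by
    simpa only [stateDist_eq_vecMul, ← mulVec_transpose, transpose_pow]
      using summable_transpose_pow_mulVec hπ hT hγ0 hγ1 μ₀ s
  rw [Fintype.sum_prod_type]
  simp only [occupancy, ← mul_sum, hπ.2, mul_one]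
  rw [← Summable.tsum_finsetSum fun s _ => hsum s]
  simp only [← mul_sum, (isDist_stateDist hπ hT hμ _).2, mul_one,
    tsum_geometric_of_lt_one hγ0 hγ1]
  exact mul_inv_cancel₀ (sub_ne_zero.mpr hγ1.ne')

end MDP

/-- Performance lower bound (Theorem 1): for MDPs `M`, `M̂` with the same reward and value
functions bounded by `δ`, learner policy `π` and behavior policy `π_D`,
`J(π,M) ≥ J(π,M̂) - (2γδ/(1-γ)) (E_{(s,a) ∼ ρ^{π_D}_M}[d_TV(T(·|s,a), T̂(·|s,a))]
 + sqrt(2 d_JS(ρ^{π_D}_M, ρ^π_{M̂})))`. -/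
theorem performance_lower_bound (M Mhat : MDP S A) (π πD : S → A → ℝ) (μ₀ : S → ℝ) (δ : ℝ)
    (hr : M.r = Mhat.r) (hγ : M.γ = Mhat.γ) (hγ0 : 0 < M.γ) (hγ1 : M.γ < 1)
    (hπ : IsPolicy π) (hπD : IsPolicy πD)
    (hT : IsKernel M.T) (hThat : IsKernel Mhat.T) (hμ : IsDist μ₀)
    (hV : ∀ s, |Vval M π s| ≤ δ) :
    Jval M π μ₀ ≥ Jval Mhat π μ₀ -
      (2 * M.γ * δ / (1 - M.γ)) *
        ((∑ s, ∑ a, occupancy M πD μ₀ s a * tvFin (M.T s a) (Mhat.T s a)) +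
          Real.sqrt (2 * jsFin (fun x : S × A => occupancy M πD μ₀ x.1 x.2)
            (fun x : S × A => occupancy Mhat π μ₀ x.1 x.2))) := by
  set f : S × A → ℝ := fun x => tvFin (M.T x.1 x.2) (Mhat.T x.1 x.2)
  set ρ : S × A → ℝ := fun x => occupancy Mhat π μ₀ x.1 x.2
  have hρ : IsDist ρ := MDP.isDist_occupancy hπ hThat hμ (hγ ▸ hγ0.le) (hγ ▸ hγ1)
  obtain ⟨s₀, -, -⟩ := exists_ne_zero_of_sum_ne_zero (hμ.2.trans_ne one_ne_zero)
  have hδ : 0 ≤ δ := (abs_nonneg _).trans (hV s₀)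
  have hmodel : ∀ x : S × A,
      ∑ s', (Mhat.T x.1 x.2 s' - M.T x.1 x.2 s') * Vval M π s' ≤ 2 * δ * f x :=
    fun x => sum_sub_mul_le_two_mul_tvFin (by rw [hT.2, hThat.2]) hV
  have hshift := sum_mul_le_sum_mul_add_sqrt_two_mul_jsFin
    (MDP.isDist_occupancy hπD hT hμ hγ0.le hγ1) hρ (f := f) (fun x => tvFin_nonneg _ _)
    fun x => tvFin_le_one ⟨hT.1 x.1 x.2, hT.2 x.1 x.2⟩ ⟨hThat.1 x.1 x.2, hThat.2 x.1 x.2⟩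
  have hK : 0 ≤ M.γ / (1 - M.γ) := div_nonneg hγ0.le (sub_nonneg.mpr hγ1.le)
  rw [ge_iff_le, sub_le_comm, MDP.Jval_sub_Jval_eq_sum_occupancy hr hγ hγ0.le hγ1 hπ hT hThat,
    ← Fintype.sum_prod_type', ← Fintype.sum_prod_type']
  calc M.γ / (1 - M.γ) * ∑ x, ρ x * ∑ s', (Mhat.T x.1 x.2 s' - M.T x.1 x.2 s') * Vval M π s'
      ≤ M.γ / (1 - M.γ) * ∑ x, ρ x * (2 * δ * f x) :=
        mul_le_mul_of_nonneg_left
          (sum_le_sum fun x _ => mul_le_mul_of_nonneg_left (hmodel x) (hρ.1 x)) hK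
    _ = 2 * δ * (M.γ / (1 - M.γ)) * ∑ x, ρ x * f x := by
        simp only [mul_left_comm _ (2 * δ), ← mul_sum]
        ring
    _ ≤ 2 * M.γ * δ / (1 - M.γ) * _ := by
        rw [show 2 * M.γ * δ / (1 - M.γ) = 2 * δ * (M.γ / (1 - M.γ)) by ring]
        exact mul_le_mul_of_nonneg_left hshift (mul_nonneg (mul_nonneg two_pos.le hδ) hK)
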